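/- arXiv:1707.04778 — 2 statements merged into one kernel-verified Lean document; each statement's English description precedes it below -/
import Mathlib

section
/- Let X be a separable complete metric space, Ω = C([0,∞) → X) with the compact-open topology, θ_s the shift, and w ⋈_s v the splicing of paths. Suppose S : X → 2^Ω satisfies: (S3) if w ∈ S(x) and s ≥ 0 then θ_s w ∈ S(w(s)); (S4) if w ∈ S(x) and v ∈ S(w(s)) then w ⋈_s v ∈ S(x). Fix λ > 0 and a bounded continuous φ : X → ℝ, and define ζ(w) = ∫₀^∞ e^{−λt} φ(w(t)) dt. If w maximizes ζ over S(x) and v maximizes ζ over S(w(s)) for some s ≥ 0, then ζ(w ⋈_s v) = ζ(w), and w ⋈_s v also maximizes ζ over S(x). -/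
/-!
Splitting the discounted integral at time `s` gives the dynamic-programming identity
`ζ(u) = ∫₀^s e^{-λt} φ(u(t)) dt + e^{-λs} ζ(θ_s u)`. The splice `w ⋈_s v` agrees with `w` on
`[0, s]` and has `θ_s (w ⋈_s v) = v`, so `ζ(w ⋈_s v) - ζ(w) = e^{-λs} (ζ(v) - ζ(θ_s w))`.
By (S3) `θ_s w ∈ S(w(s))`, so this difference is `≥ 0` because `v` is optimal from `w(s)`;
by (S4) `w ⋈_s v ∈ S(x)`, so it is `≤ 0` because `w` is optimal from `x`.
-/

open MeasureTheory Set
open scoped NNReal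

noncomputable section

/-- The space `Ω = C([0,∞) → X)` with the compact-open topology. -/
abbrev IPath (X : Type*) [TopologicalSpace X] : Type _ := C(ℝ≥0, X)

variable {X : Type*} [TopologicalSpace X]

/-- The shift `θ_s : w(·) ↦ w(s + ·)`. -/
def shift (s : ℝ≥0) (w : IPath X) : IPath X :=
  w.comp ⟨fun t => s + t, by fun_prop⟩

/-- The splicing `w ⋈_s v` of two paths with `w s = v 0`. -/
def splice (s : ℝ≥0) (w v : IPath X) (h : w s = v 0) : IPath X :=
  ⟨fun t => if t ≤ s then w t else v (t - s), by
    refine Continuous.if_le w.continuous (v.continuous.comp ?_) continuous_id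
      continuous_const ?_
    · exact continuous_id.sub continuous_const
    · intro t ht
      rw [ht, tsub_self]
      exact h⟩

/-- The functional `ζ(w) = ∫₀^∞ e^{-λ t} φ(w(t)) dt`. -/
def zeta (lam : ℝ) (phi : X → ℝ) (w : IPath X) : ℝ :=
  ∫ t in Ioi (0 : ℝ), Real.exp (-lam * t) * phi (w (Real.toNNReal t))

theorem integral_Ioi_comp_add_right {E : Type*} [NormedAddCommGroup E] [NormedSpace ℝ E]
    (f : ℝ → E) (a s : ℝ) :
    ∫ t in Ioi a, f (t + s) = ∫ t in Ioi (a + s), f t := by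
  simpa only [preimage_add_const_Ioi, add_sub_cancel_right] using
    (measurePreserving_add_right volume s).setIntegral_preimage_emb
      (measurableEmbedding_addRight s) f (Ioi (a + s))

theorem integrableOn_exp_neg_mul_Ioi {lam : ℝ} (hlam : 0 < lam) {g : ℝ → ℝ}
    (hg : AEStronglyMeasurable g) {M : ℝ} (hM : ∀ t, |g t| ≤ M) (a : ℝ) :
    IntegrableOn (fun t => Real.exp (-lam * t) * g t) (Ioi a) := by
  refine Integrable.mono' ((exp_neg_integrableOn_Ioi a hlam).const_mul M)
    ((by fun_prop : Continuous fun t => Real.exp (-lam * t)).aestronglyMeasurable.mul hg).restrict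
    (Filter.Eventually.of_forall fun t => ?_)
  rw [norm_mul, Real.norm_of_nonneg (Real.exp_pos _).le, Real.norm_eq_abs, mul_comm]
  exact mul_le_mul_of_nonneg_right (hM t) (Real.exp_pos _).le

theorem splice_apply_of_le {s : ℝ≥0} {w v : IPath X} (h : w s = v 0) {t : ℝ≥0} (ht : t ≤ s) :
    splice s w v h t = w t :=
  if_pos ht

theorem shift_splice (s : ℝ≥0) (w v : IPath X) (h : w s = v 0) : shift s (splice s w v h) = v := by
  ext t
  change (if s + t ≤ s then w (s + t) else v (s + t - s)) = v t
  split_ifs with hst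
  · obtain rfl : t = 0 := le_antisymm (by simpa using hst) zero_le
    rw [add_zero, h]
  · rw [add_tsub_cancel_left]

section Discounted

variable {lam : ℝ} {phi : X → ℝ}

theorem integrableOn_zeta_integrand (hlam : 0 < lam) (hphic : Continuous phi)
    (hphib : ∃ M, ∀ y, |phi y| ≤ M) (u : IPath X) (a : ℝ) :
    IntegrableOn (fun t => Real.exp (-lam * t) * phi (u (Real.toNNReal t))) (Ioi a) :=
  have ⟨_, hM⟩ := hphib
  integrableOn_exp_neg_mul_Ioi hlam
    (hphic.comp (u.continuous.comp continuous_real_toNNReal)).aestronglyMeasurable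
    (fun _ => hM _) a

theorem zeta_eq_integral_add_exp_mul_zeta_shift (hlam : 0 < lam) (hphic : Continuous phi)
    (hphib : ∃ M, ∀ y, |phi y| ≤ M) (u : IPath X) (s : ℝ≥0) :
    zeta lam phi u = (∫ t in (0 : ℝ)..s, Real.exp (-lam * t) * phi (u (Real.toNNReal t))) +
      Real.exp (-lam * s) * zeta lam phi (shift s u) := by
  have hint := integrableOn_zeta_integrand hlam hphic hphib u
  rw [zeta, ← intervalIntegral.integral_interval_add_Ioi (hint 0) (hint s), zeta,
    ← integral_const_mul, ← zero_add (s : ℝ), ← integral_Ioi_comp_add_right, zero_add]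
  congr 1
  refine setIntegral_congr_fun measurableSet_Ioi fun t ht => ?_
  have htoNNReal : Real.toNNReal (t + s) = s + Real.toNNReal t := by
    rw [Real.toNNReal_add (le_of_lt ht) s.coe_nonneg, Real.toNNReal_coe, add_comm]
  change _ = _ * (_ * phi (u (s + _)))
  rw [htoNNReal, ← mul_assoc, ← Real.exp_add]
  ring_nf

theorem zeta_splice (hlam : 0 < lam) (hphic : Continuous phi) (hphib : ∃ M, ∀ y, |phi y| ≤ M)
    (s : ℝ≥0) (w v : IPath X) (h : w s = v 0) :
    zeta lam phi (splice s w v h) =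
      zeta lam phi w + Real.exp (-lam * s) * (zeta lam phi v - zeta lam phi (shift s w)) := by
  have hhead : (∫ t in (0 : ℝ)..s, Real.exp (-lam * t) * phi (splice s w v h (Real.toNNReal t))) =
      ∫ t in (0 : ℝ)..s, Real.exp (-lam * t) * phi (w (Real.toNNReal t)) := by
    refine intervalIntegral.integral_congr fun t ht => ?_
    rw [uIcc_of_le s.coe_nonneg] at ht
    rw [splice_apply_of_le h (Real.toNNReal_le_iff_le_coe.mpr ht.2)]
  rw [zeta_eq_integral_add_exp_mul_zeta_shift hlam hphic hphib, shift_splice, hhead,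
    zeta_eq_integral_add_exp_mul_zeta_shift hlam hphic hphib w s]
  ring

end Discounted

theorem splice_of_maximizers_is_maximizer_general
    {X : Type*} [MetricSpace X]
    (S : X → Set (IPath X))
    (hS0 : ∀ x, ∀ w ∈ S x, w 0 = x)
    (hS3 : ∀ x, ∀ w ∈ S x, ∀ s : ℝ≥0, shift s w ∈ S (w s))
    (hS4 : ∀ x, ∀ w ∈ S x, ∀ s : ℝ≥0, ∀ v, ∀ hv : v ∈ S (w s),
      splice s w v ((hS0 _ v hv).symm) ∈ S x)
    (lam : ℝ) (hlam : 0 < lam)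
    (phi : X → ℝ) (hphic : Continuous phi) (hphib : ∃ M, ∀ y, |phi y| ≤ M)
    (x : X) (s : ℝ≥0) (w v : IPath X)
    (hw : w ∈ S x)
    (hwmax : ∀ u ∈ S x, zeta lam phi u ≤ zeta lam phi w)
    (hv : v ∈ S (w s))
    (hvmax : ∀ u ∈ S (w s), zeta lam phi u ≤ zeta lam phi v) :
    zeta lam phi (splice s w v ((hS0 _ v hv).symm)) = zeta lam phi w ∧
      splice s w v ((hS0 _ v hv).symm) ∈ S x ∧
      ∀ u ∈ S x, zeta lam phi u ≤ zeta lam phi (splice s w v ((hS0 _ v hv).symm)) := by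
  have hmem := hS4 x w hw s v hv
  have hge : zeta lam phi w ≤ zeta lam phi (splice s w v ((hS0 _ v hv).symm)) := by
    rw [zeta_splice hlam hphic hphib]
    exact le_add_of_nonneg_right <| mul_nonneg (Real.exp_pos _).le <|
      sub_nonneg.mpr (hvmax _ (hS3 x w hw s))
  have heq := le_antisymm (hwmax _ hmem) hge
  exact ⟨heq, hmem, fun u hu => heq ▸ hwmax u hu⟩

/-- If `w` maximizes `ζ` over `S(x)` and `v` maximizes `ζ` over `S(w(s))`, then
`ζ(w ⋈_s v) = ζ(w)`, and `w ⋈_s v` also maximizes `ζ` over `S(x)`. -/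
theorem splice_of_maximizers_is_maximizer
    {X : Type*} [MetricSpace X] [CompleteSpace X] [SecondCountableTopology X]
    (S : X → Set (IPath X))
    (hS0 : ∀ x, ∀ w ∈ S x, w 0 = x)
    (hS3 : ∀ x, ∀ w ∈ S x, ∀ s : ℝ≥0, shift s w ∈ S (w s))
    (hS4 : ∀ x, ∀ w ∈ S x, ∀ s : ℝ≥0, ∀ v, ∀ hv : v ∈ S (w s),
      splice s w v ((hS0 _ v hv).symm) ∈ S x)
    (lam : ℝ) (hlam : 0 < lam)
    (phi : X → ℝ) (hphic : Continuous phi) (hphib : ∃ M, ∀ y, |phi y| ≤ M)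
    (x : X) (s : ℝ≥0) (w v : IPath X)
    (hw : w ∈ S x)
    (hwmax : ∀ u ∈ S x, zeta lam phi u ≤ zeta lam phi w)
    (hv : v ∈ S (w s))
    (hvmax : ∀ u ∈ S (w s), zeta lam phi u ≤ zeta lam phi v) :
    zeta lam phi (splice s w v ((hS0 _ v hv).symm)) = zeta lam phi w ∧
      splice s w v ((hS0 _ v hv).symm) ∈ S x ∧
      ∀ u ∈ S x, zeta lam phi u ≤ zeta lam phi (splice s w v ((hS0 _ v hv).symm)) :=
  splice_of_maximizers_is_maximizer_general S hS0 hS3 hS4 lam hlam phi hphic hphib x s w v hw hwmax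
    hv hvmax
end
end

section
/- Let X be a separable complete metric space and let Φ be a set of bounded continuous real-valued functions on X that separates points of X (for any x ≠ y there is φ ∈ Φ with φ(x) ≠ φ(y)). Let Λ be a dense subset of (0,∞). If w, v : [0,∞) → X are continuous paths such that ∫₀^∞ e^{−λt} φ(w(t)) dt = ∫₀^∞ e^{−λt} φ(v(t)) dt for every λ ∈ Λ and every φ ∈ Φ, then w(t) = v(t) for all t ≥ 0. -/
/-!
For `φ ∈ Φ` the difference `d(t) = φ(w t) - φ(v t)` is bounded and continuous. Its Laplace
transform is continuous on `(0, ∞)` by dominated convergence, so vanishing on the dense set `Λ`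
it vanishes on all of `(0, ∞)`. The substitution `u = e^{-t}` turns its values at `λ = n + 2`
into the moments of the continuous function `u ↦ u d(-log u)` on `[0, 1]`, which by Weierstrass
must then vanish; hence `d = 0`, and since `Φ` separates points, `w = v`.
-/

open MeasureTheory Set
open scoped NNReal

noncomputable section

variable {X : Type*} [TopologicalSpace X]

open Filter Topology Polynomial Real

section Moments

variable {q : ℝ → ℝ} {a b : ℝ}

theorem integral_eval_mul_eq_zero_of_moments (hq : ContinuousOn q (Icc a b))
    (hmom : ∀ n : ℕ, ∫ u in Ioo a b, u ^ n * q u = 0) (P : ℝ[X]) :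
    ∫ u in Ioo a b, P.eval u * q u = 0 := by
  have hint (n : ℕ) : IntegrableOn (fun u => u ^ n * q u) (Ioo a b) :=
    (((continuous_pow n).continuousOn.mul hq).integrableOn_compact isCompact_Icc).mono_set
      Ioo_subset_Icc_self
  simp only [eval_eq_sum_range, Finset.sum_mul, mul_assoc]
  rw [integral_finsetSum _ fun i _ => (hint i).const_mul _]
  simp [integral_const_mul, hmom]

theorem integral_sq_eq_zero_of_moments (hq : ContinuousOn q (Icc a b))
    (hmom : ∀ n : ℕ, ∫ u in Ioo a b, u ^ n * q u = 0) :
    ∫ u in Ioo a b, q u ^ 2 = 0 := by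
  obtain ⟨C, hC⟩ := isCompact_Icc.exists_bound_of_continuousOn hq
  -- `∫ q² = ∫ q (q - P)` for every polynomial `P`, and Weierstrass makes `q - P` small.
  have hsmall : ∀ ε > 0, |∫ u in Ioo a b, q u ^ 2| ≤ C * volume.real (Ioo a b) * ε := by
    intro ε hε
    obtain ⟨P, hP⟩ := exists_polynomial_near_of_continuousOn a b q hq ε hε
    have hqP : IntegrableOn (fun u => P.eval u * q u) (Ioo a b) :=
      ((P.continuous.continuousOn.mul hq).integrableOn_compact isCompact_Icc).mono_set
        Ioo_subset_Icc_self
    have hsq : IntegrableOn (fun u => q u ^ 2) (Ioo a b) :=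
      ((hq.pow 2).integrableOn_compact isCompact_Icc).mono_set Ioo_subset_Icc_self
    have hsplit : ∫ u in Ioo a b, q u ^ 2 = ∫ u in Ioo a b, (q u - P.eval u) * q u := by
      rw [← sub_zero (∫ u in Ioo a b, q u ^ 2), ← integral_eval_mul_eq_zero_of_moments hq hmom P,
        ← integral_sub hsq hqP]
      simp only [sub_mul, sq]
    rw [hsplit, ← Real.norm_eq_abs, mul_right_comm]
    refine norm_setIntegral_le_of_norm_le_const measure_Ioo_lt_top fun u hu => ?_
    have hu' := Ioo_subset_Icc_self hu
    rw [norm_mul, mul_comm]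
    exact mul_le_mul (hC u hu') (by simpa [abs_sub_comm] using (hP u hu').le) (norm_nonneg _)
      ((norm_nonneg _).trans (hC u hu'))
  have hlim : Tendsto (fun ε => C * volume.real (Ioo a b) * ε) (𝓝[>] 0) (𝓝 0) := by
    simpa using ((continuous_const_mul (C * volume.real (Ioo a b))).tendsto 0).mono_left
      nhdsWithin_le_nhds
  exact abs_nonpos_iff.1 (ge_of_tendsto hlim (eventually_nhdsWithin_of_forall hsmall))

theorem eqOn_zero_of_moments_eq_zero (hq : ContinuousOn q (Icc a b))
    (hmom : ∀ n : ℕ, ∫ u in Ioo a b, u ^ n * q u = 0) :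
    EqOn q 0 (Ioo a b) := by
  have hsq : IntegrableOn (fun u => q u ^ 2) (Ioo a b) :=
    ((hq.pow 2).integrableOn_compact isCompact_Icc).mono_set Ioo_subset_Icc_self
  have hae := (setIntegral_eq_zero_iff_of_nonneg_ae (ae_of_all _ fun u => sq_nonneg (q u))
    hsq).1 (integral_sq_eq_zero_of_moments hq hmom)
  intro u hu
  simpa using Measure.eqOn_open_of_ae_eq hae isOpen_Ioo
    ((hq.mono Ioo_subset_Icc_self).pow 2) continuousOn_const hu

end Moments

def laplaceTransform (d : ℝ → ℝ) (lam : ℝ) : ℝ :=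
  ∫ t in Ioi 0, exp (-lam * t) * d t

section Laplace

variable {d : ℝ → ℝ} {C : ℝ}

theorem integrableOn_exp_mul_of_abs_le (hd : AEStronglyMeasurable d (volume.restrict (Ioi 0)))
    (hC : ∀ t, |d t| ≤ C) {lam : ℝ} (hlam : 0 < lam) :
    IntegrableOn (fun t => exp (-lam * t) * d t) (Ioi 0) :=
  (exp_neg_integrableOn_Ioi 0 hlam).mul_bdd hd (ae_of_all _ hC)

theorem laplaceTransform_sub {f g : ℝ → ℝ} {C' : ℝ}
    (hf : AEStronglyMeasurable f (volume.restrict (Ioi 0))) (hfC : ∀ t, |f t| ≤ C)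
    (hg : AEStronglyMeasurable g (volume.restrict (Ioi 0))) (hgC : ∀ t, |g t| ≤ C')
    {lam : ℝ} (hlam : 0 < lam) :
    laplaceTransform (f - g) lam = laplaceTransform f lam - laplaceTransform g lam := by
  simp only [laplaceTransform, Pi.sub_apply, mul_sub]
  exact integral_sub (integrableOn_exp_mul_of_abs_le hf hfC hlam)
    (integrableOn_exp_mul_of_abs_le hg hgC hlam)

theorem continuousOn_laplaceTransform (hd : AEStronglyMeasurable d (volume.restrict (Ioi 0)))
    (hC : ∀ t, |d t| ≤ C) : ContinuousOn (laplaceTransform d) (Ioi 0) := by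
  intro lam₀ hlam₀
  refine ContinuousAt.continuousWithinAt <| continuousAt_of_dominated
    (bound := fun t => C * exp (-(lam₀ / 2) * t)) ?_ ?_ ?_ ?_
  · exact Eventually.of_forall fun lam =>
      (by fun_prop : Continuous fun t => exp (-lam * t)).aestronglyMeasurable.mul hd
  · filter_upwards [eventually_gt_nhds (half_lt_self hlam₀)] with lam hlam
    filter_upwards [ae_restrict_mem measurableSet_Ioi] with t (ht : 0 < t)
    rw [norm_mul, Real.norm_of_nonneg (exp_pos _).le, mul_comm]
    exact mul_le_mul (hC t) (exp_le_exp.2 (by nlinarith)) (exp_pos _).le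
      ((abs_nonneg _).trans (hC t))
  · exact (exp_neg_integrableOn_Ioi 0 (half_pos hlam₀)).const_mul C
  · exact ae_of_all _ fun t => by fun_prop

theorem setIntegral_pow_mul_comp_neg_log_eq_laplaceTransform (d : ℝ → ℝ) (n : ℕ) :
    ∫ u in Ioo 0 1, u ^ n * (u * d (-log u)) = laplaceTransform d (n + 2) := by
  have himage : (fun t => exp (-t)) '' Ioi 0 = Ioo 0 1 := by
    rw [← image_image exp Neg.neg, image_neg_Ioi, neg_zero, image_exp_Iio, exp_zero]
  rw [← himage, integral_image_eq_integral_abs_deriv_smul measurableSet_Ioi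
    (fun t _ => ((hasDerivAt_neg t).exp).hasDerivWithinAt)
    (exp_injective.comp neg_injective).injOn]
  refine setIntegral_congr_fun measurableSet_Ioi fun t _ => ?_
  have hpow : exp (-((n : ℝ) + 2) * t) = exp (-t) ^ (n + 2) := by
    rw [← exp_nat_mul]; push_cast; ring_nf
  simp only [log_exp, neg_neg, smul_eq_mul, hpow, mul_neg_one, abs_neg, abs_of_pos (exp_pos _)]
  ring

theorem continuous_mul_comp_neg_log (hd : Continuous d) (hC : ∀ t, |d t| ≤ C) :
    Continuous fun u => u * d (-log u) := by
  refine continuous_iff_continuousAt.2 fun u => ?_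
  rcases eq_or_ne u 0 with rfl | hu
  · simpa [ContinuousAt] using tendsto_id.zero_mul_isBoundedUnder_le
      (isBoundedUnder_of ⟨C, fun u => hC (-log u)⟩)
  · exact continuousAt_id.mul (hd.continuousAt.comp (continuousAt_log hu).neg)

theorem eqOn_zero_of_laplaceTransform_eq_zero (hd : Continuous d) (hC : ∀ t, |d t| ≤ C)
    (h : EqOn (laplaceTransform d) 0 (Ioi 0)) : EqOn d 0 (Ici 0) := by
  -- Under `u = e^{-t}` the Laplace transform at `n + 2` becomes the `n`-th moment on `(0, 1)`.
  have hq : EqOn (fun u => u * d (-log u)) 0 (Ioo 0 1) :=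
    eqOn_zero_of_moments_eq_zero (continuous_mul_comp_neg_log hd hC).continuousOn fun n => by
      rw [setIntegral_pow_mul_comp_neg_log_eq_laplaceTransform]
      exact h (by positivity : (0 : ℝ) < n + 2)
  have hpos : EqOn d 0 (Ioi 0) := fun t (ht : 0 < t) => by
    simpa [(exp_pos _).ne'] using hq ⟨exp_pos (-t), exp_lt_one_iff.2 (neg_lt_zero.2 ht)⟩
  rw [← closure_Ioi]
  exact hpos.closure hd continuous_const

end Laplace

theorem paths_equal_of_laplace_functionals_equal_general
    {X : Type*} [MetricSpace X]
    (Φ : Set (X → ℝ))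
    (hΦc : ∀ φ ∈ Φ, Continuous φ)
    (hΦb : ∀ φ ∈ Φ, ∃ M, ∀ y, |φ y| ≤ M)
    (hΦsep : ∀ x y : X, x ≠ y → ∃ φ ∈ Φ, φ x ≠ φ y)
    (Λ : Set ℝ) (hΛ : Λ ⊆ Ioi (0 : ℝ)) (hΛdense : Ioi (0 : ℝ) ⊆ closure Λ)
    (w v : IPath X)
    (heq : ∀ lam ∈ Λ, ∀ φ ∈ Φ, zeta lam φ w = zeta lam φ v) :
    ∀ t : ℝ≥0, w t = v t := by
  intro t
  by_contra hne
  obtain ⟨φ, hφ, hφt⟩ := hΦsep _ _ hne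
  obtain ⟨M, hM⟩ := hΦb φ hφ
  have hφc := hΦc φ hφ
  set f : ℝ → ℝ := fun s => φ (w s.toNNReal)
  set g : ℝ → ℝ := fun s => φ (v s.toNNReal)
  have hf : Continuous f := by fun_prop
  have hg : Continuous g := by fun_prop
  have hfg : ∀ s, |(f - g) s| ≤ M + M := fun s => (abs_sub _ _).trans (add_le_add (hM _) (hM _))
  have hΛ0 : EqOn (laplaceTransform (f - g)) 0 Λ := fun lam hlam => by
    rw [laplaceTransform_sub hf.aestronglyMeasurable (fun _ => hM _) hg.aestronglyMeasurable
      (fun _ => hM _) (hΛ hlam)]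
    -- `zeta lam φ w` unfolds to `laplaceTransform f lam`.
    exact sub_eq_zero.2 (heq lam hlam φ hφ)
  have hfg0 := eqOn_zero_of_laplaceTransform_eq_zero (hf.sub hg) hfg <|
    hΛ0.of_subset_closure (continuousOn_laplaceTransform (hf.sub hg).aestronglyMeasurable hfg)
      continuousOn_const hΛ hΛdense
  exact hφt (sub_eq_zero.1 (by simpa [f, g] using hfg0 t.coe_nonneg))

/-- If a family `Φ` of bounded continuous functions separates the points of a separable
complete metric space `X`, and two continuous paths `w, v` in `X` satisfy
`∫₀^∞ e^{-λt} φ(w(t)) dt = ∫₀^∞ e^{-λt} φ(v(t)) dt` for every `λ` in a dense subset `Λ`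
of `(0,∞)` and every `φ ∈ Φ`, then `w = v`. -/
theorem paths_equal_of_laplace_functionals_equal
    {X : Type*} [MetricSpace X] [CompleteSpace X] [SecondCountableTopology X]
    (Φ : Set (X → ℝ))
    (hΦc : ∀ φ ∈ Φ, Continuous φ)
    (hΦb : ∀ φ ∈ Φ, ∃ M, ∀ y, |φ y| ≤ M)
    (hΦsep : ∀ x y : X, x ≠ y → ∃ φ ∈ Φ, φ x ≠ φ y)
    (Λ : Set ℝ) (hΛ : Λ ⊆ Ioi (0 : ℝ)) (hΛdense : Ioi (0 : ℝ) ⊆ closure Λ)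
    (w v : IPath X)
    (heq : ∀ lam ∈ Λ, ∀ φ ∈ Φ, zeta lam φ w = zeta lam φ v) :
    ∀ t : ℝ≥0, w t = v t :=
  paths_equal_of_laplace_functionals_equal_general Φ hΦc hΦb hΦsep Λ hΛ hΛdense w v heq
end
end
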